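/- arXiv:2002.05456 — 2 statements merged into one kernel-verified Lean document; each statement's English description precedes it below -/
import Mathlib

section
/- (Stečkin) Let s = σ + it with 1 < σ ≤ 1.25 and let z ∈ ℂ with Im(z) = t and 1/2 ≤ Re(z) < 1. Then Re(1/(s-1+conj(z))) - κ·F(σ₁(σ) + it, z) ≥ 0. -/
/-- `κ = 1/√5`. -/
noncomputable def κ : ℝ := 1 / Real.sqrt 5

/-- `σ₁(σ) = (1 + √(1 + 4σ²))/2`. -/
noncomputable def σ₁ (σ : ℝ) : ℝ := (1 + Real.sqrt (1 + 4 * σ ^ 2)) / 2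

/-- `F(s,z) = Re(1/(s-z) + 1/(s-1+conj z))`. -/
noncomputable def F (s z : ℂ) : ℝ := ((s - z)⁻¹ + (s - 1 + (starRingEnd ℂ) z)⁻¹).re

/-!
When `Im s = Im z`, all three points `s - 1 + conj z`, `s₁ - z`, `s₁ - 1 + conj z` (with
`s₁ = σ₁(σ) + it`) are real, so the claim is an inequality between real numbers. Writing
`β = Re z`, the last two are `σ₁ - β` and `σ₁ - 1 + β`; their sum is `2σ₁ - 1 = √(1 + 4σ²)` and,
since `σ₁² - σ₁ = σ²`, their product is `σ² + β(1 - β)`. The claim becomes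
`√(1 + 4σ²) (σ - 1 + β) ≤ √5 (σ² + β(1 - β))`, and after squaring it is a polynomial
inequality that holds for `σ ≥ 1` and `1/2 ≤ β ≤ 1`.
-/

open Complex

lemma sub_eq_ofReal_of_im_eq {s z : ℂ} (h : s.im = z.im) : s - z = ((s.re - z.re : ℝ) : ℂ) :=
  Complex.ext (by simp) (by simp [h])

lemma sub_one_add_conj_eq_ofReal_of_im_eq {s z : ℂ} (h : s.im = z.im) :
    s - 1 + (starRingEnd ℂ) z = ((s.re - 1 + z.re : ℝ) : ℂ) :=
  Complex.ext (by simp) (by simp [h])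

lemma re_inv_sub_one_add_conj_of_im_eq {s z : ℂ} (h : s.im = z.im) :
    (s - 1 + (starRingEnd ℂ) z)⁻¹.re = (s.re - 1 + z.re)⁻¹ := by
  rw [sub_one_add_conj_eq_ofReal_of_im_eq h, ← ofReal_inv, ofReal_re]

lemma F_of_im_eq {s z : ℂ} (h : s.im = z.im) :
    F s z = (s.re - z.re)⁻¹ + (s.re - 1 + z.re)⁻¹ := by
  rw [F, add_re, re_inv_sub_one_add_conj_of_im_eq h, sub_eq_ofReal_of_im_eq h, ← ofReal_inv,
    ofReal_re]

lemma re_ofReal_add_ofReal_mul_I (x y : ℝ) : ((x : ℂ) + y * I).re = x := by simp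

lemma two_mul_σ₁_sub_one (σ : ℝ) : 2 * σ₁ σ - 1 = √(1 + 4 * σ ^ 2) := by
  rw [σ₁]; ring

lemma σ₁_sq_sub_σ₁ (σ : ℝ) : σ₁ σ ^ 2 - σ₁ σ = σ ^ 2 := by
  have h := Real.sq_sqrt (by positivity : (0 : ℝ) ≤ 1 + 4 * σ ^ 2)
  rw [σ₁]; linear_combination h / 4

lemma F_σ₁_of_im_eq {σ t : ℝ} {z : ℂ} (hzt : z.im = t) (h : σ ^ 2 + z.re * (1 - z.re) ≠ 0) :
    F (σ₁ σ + t * I) z = √(1 + 4 * σ ^ 2) / (σ ^ 2 + z.re * (1 - z.re)) := by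
  have hprod : (σ₁ σ - z.re) * (σ₁ σ - 1 + z.re) = σ ^ 2 + z.re * (1 - z.re) := by
    linear_combination σ₁_sq_sub_σ₁ σ
  rw [← hprod] at h
  rw [F_of_im_eq (by simp [hzt]), re_ofReal_add_ofReal_mul_I, ← hprod,
    inv_add_inv (left_ne_zero_of_mul h) (right_ne_zero_of_mul h), ← two_mul_σ₁_sub_one]
  ring

lemma one_add_four_sq_mul_sq_le_five_mul_sq {σ β : ℝ} (hσ : 1 ≤ σ) (hβ₀ : 1 / 2 ≤ β)
    (hβ₁ : β ≤ 1) : (1 + 4 * σ ^ 2) * (σ - 1 + β) ^ 2 ≤ 5 * (σ ^ 2 + β * (1 - β)) ^ 2 := by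
  obtain ⟨c, rfl⟩ : ∃ c, β = 1 - c := ⟨1 - β, by ring⟩
  have hc₀ : 0 ≤ c := by linarith
  have h₁ : 0 ≤ σ ^ 2 * (σ ^ 2 - 1) := mul_nonneg (by positivity) (by nlinarith)
  have h₂ : 0 ≤ σ ^ 3 * c := by positivity
  have h₃ : 0 ≤ σ ^ 2 * c * (10 - 14 * c) := mul_nonneg (by positivity) (by linarith)
  have h₄ : 0 ≤ c * (2 * σ - c) := mul_nonneg hc₀ (by linarith)
  have h₅ : 0 ≤ c ^ 2 * (1 - c) ^ 2 := by positivity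
  linear_combination h₁ + 8 * h₂ + h₃ + h₄ + 5 * h₅

lemma sqrt_mul_le_mul_sqrt_five {σ β : ℝ} (hσ : 1 ≤ σ) (hβ₀ : 1 / 2 ≤ β) (hβ₁ : β ≤ 1) :
    √(1 + 4 * σ ^ 2) * (σ - 1 + β) ≤ (σ ^ 2 + β * (1 - β)) * √5 := by
  have hA : 0 ≤ σ - 1 + β := by linarith
  have hP : 0 ≤ σ ^ 2 + β * (1 - β) := by nlinarith
  rw [← Real.sqrt_sq hA, ← Real.sqrt_sq hP, ← Real.sqrt_mul (by positivity),
    ← Real.sqrt_mul (by positivity)]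
  exact Real.sqrt_le_sqrt (by linarith [one_add_four_sq_mul_sq_le_five_mul_sq hσ hβ₀ hβ₁])

theorem steckin_second_general (σ t : ℝ) (hσ : 1 < σ)
    (z : ℂ) (hzt : z.im = t) (hz₀ : 1 / 2 ≤ z.re) (hz₁ : z.re < 1) :
    0 ≤ ((((σ : ℂ) + t * Complex.I) - 1 + (starRingEnd ℂ) z)⁻¹).re -
        κ * F (σ₁ σ + t * Complex.I) z := by
  have hA : 0 < σ - 1 + z.re := by linarith
  have hP : 0 < σ ^ 2 + z.re * (1 - z.re) := by nlinarith
  rw [re_inv_sub_one_add_conj_of_im_eq (by simp [hzt]), F_σ₁_of_im_eq hzt hP.ne', sub_nonneg,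
    re_ofReal_add_ofReal_mul_I]
  unfold κ
  rw [one_div_mul_eq_div, div_div, div_le_iff₀ (by positivity), inv_mul_eq_div, le_div_iff₀ hA]
  exact sqrt_mul_le_mul_sqrt_five hσ.le hz₀ hz₁.le

/-- **Stečkin's lemma, second inequality**: for `s = σ + it` with `1 < σ ≤ 1.25`,
and `z` with `Im z = t` and `1/2 ≤ Re z < 1`,
`Re(1/(s-1+conj z)) - κ F(σ₁(σ) + it, z) ≥ 0`. -/
theorem steckin_second (σ t : ℝ) (hσ : 1 < σ) (hσ' : σ ≤ 1.25)
    (z : ℂ) (hzt : z.im = t) (hz₀ : 1 / 2 ≤ z.re) (hz₁ : z.re < 1) :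
    0 ≤ ((((σ : ℂ) + t * Complex.I) - 1 + (starRingEnd ℂ) z)⁻¹).re -
        κ * F (σ₁ σ + t * Complex.I) z :=
  steckin_second_general σ t hσ z hzt hz₀ hz₁
end

section
/- For every integer k ≥ 3, every real σ with 1 ≤ σ ≤ 1.15, and every real t ≥ 1, one has Ξ(σ,k,t,1) ≤ 0. -/
noncomputable def Xi (σ : ℝ) (k : ℕ) (t δ : ℝ) : ℝ :=
  1 / 4 * Real.log (1 + ((σ + δ) / (k * t)) ^ 2) -
    κ / 4 * Real.log (1 + ((σ₁ σ + δ) / (k * t)) ^ 2) -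
    (σ + δ) / (2 * ((σ + δ) ^ 2 + k ^ 2 * t ^ 2)) +
    κ * (σ₁ σ + δ) / (2 * ((σ₁ σ + δ) ^ 2 + k ^ 2 * t ^ 2))

open Real

lemma log_le_sub_inv_div_two {x : ℝ} (hx : 1 ≤ x) : log x ≤ (x - x⁻¹) / 2 := by
  rw [← sinh_log (by positivity)]
  exact self_le_sinh_iff.mpr (log_nonneg hx)

noncomputable def xiTerm (x c : ℝ) : ℝ :=
  1 / 4 * log (1 + (c / x) ^ 2) - c / (2 * (c ^ 2 + x ^ 2))

lemma Xi_eq_xiTerm_sub (σ : ℝ) (k : ℕ) (t δ : ℝ) :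
    Xi σ k t δ = xiTerm (k * t) (σ + δ) - κ * xiTerm (k * t) (σ₁ σ + δ) := by
  simp only [Xi, xiTerm, mul_pow]
  ring

lemma xiTerm_le {x : ℝ} (hx : x ≠ 0) (c : ℝ) :
    xiTerm x c ≤ c * (c ^ 3 + 2 * c * x ^ 2 - 4 * x ^ 2) / (8 * x ^ 2 * (x ^ 2 + c ^ 2)) := by
  have hlog := log_le_sub_inv_div_two (le_add_of_nonneg_right (sq_nonneg (c / x)))
  calc xiTerm x c ≤ 1 / 4 * ((1 + (c / x) ^ 2 - (1 + (c / x) ^ 2)⁻¹) / 2)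
        - c / (2 * (c ^ 2 + x ^ 2)) := by unfold xiTerm; linarith
    _ = _ := by field_simp; ring

lemma le_xiTerm {x : ℝ} (hx : x ≠ 0) (c : ℝ) :
    c * (c ^ 3 - c ^ 2 + (c - 2) * x ^ 2) / (2 * (2 * x ^ 2 + c ^ 2) * (x ^ 2 + c ^ 2))
      ≤ xiTerm x c := by
  have hlog := le_log_one_add_of_nonneg (sq_nonneg (c / x))
  calc _ = 1 / 4 * (2 * (c / x) ^ 2 / ((c / x) ^ 2 + 2)) - c / (2 * (c ^ 2 + x ^ 2)) := by
          field_simp; ring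
    _ ≤ xiTerm x c := by unfold xiTerm; linarith

lemma cubic_nonpos_of_le {c₃ c₂ c₁ c₀ x₀ x : ℝ} (h₃ : c₃ ≤ 0) (h₂ : c₂ ≤ 0) (h₀ : 0 ≤ c₀)
    (hx₀ : 0 < x₀) (hx : x₀ ≤ x) (h : c₃ * x₀ ^ 3 + c₂ * x₀ ^ 2 + c₁ * x₀ + c₀ ≤ 0) :
    c₃ * x ^ 3 + c₂ * x ^ 2 + c₁ * x + c₀ ≤ 0 := by
  have hx0 : 0 ≤ x := hx₀.le.trans hx
  have hd : 0 ≤ x - x₀ := sub_nonneg.mpr hx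
  have hxx₀ : 0 ≤ x₀ * x := mul_nonneg hx₀.le hx0
  have hdecomp : (c₃ * x ^ 3 + c₂ * x ^ 2 + c₁ * x + c₀) * x₀
      = c₃ * (x₀ * x * (x + x₀) * (x - x₀)) + c₂ * (x₀ * x * (x - x₀))
        + x * (c₃ * x₀ ^ 3 + c₂ * x₀ ^ 2 + c₁ * x₀ + c₀) - c₀ * (x - x₀) := by ring
  refine nonpos_of_mul_nonpos_left ?_ hx₀
  rw [hdecomp]
  have := mul_nonpos_of_nonpos_of_nonneg h₃
    (mul_nonneg (mul_nonneg hxx₀ (add_nonneg hx0 hx₀.le)) hd)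
  have := mul_nonpos_of_nonpos_of_nonneg h₂ (mul_nonneg hxx₀ hd)
  have := mul_nonpos_of_nonneg_of_nonpos hx0 h
  have := mul_nonneg h₀ hd
  linarith

lemma ratio_antitoneOn :
    AntitoneOn (fun b : ℝ => (b ^ 3 + 18 * b ^ 2 + 18 * b + 162) / ((9 + b ^ 2) * (18 + b ^ 2)))
      (Set.Ici 1) := by
  intro c hc b hb hcb
  rw [div_le_div_iff₀ (by positivity) (by positivity)]
  have h : 0 ≤ b - c := sub_nonneg.mpr hcb
  have hu : 0 ≤ b - 1 := sub_nonneg.mpr hb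
  have hv : 0 ≤ c - 1 := sub_nonneg.mpr hc
  -- the difference is `(b - c)` times a polynomial in `b - 1`, `c - 1` with positive coefficients
  nlinarith [mul_nonneg h (mul_nonneg hu hv), mul_nonneg h hu, mul_nonneg h hv,
    mul_nonneg (mul_nonneg h (mul_nonneg hu hv)) (mul_nonneg hu hv)]

lemma cleared_ineq_nine_edge {a : ℝ} (ha : 2 ≤ a) (ha' : a ≤ 43 / 20) :
    a * (a ^ 3 + 18 * a - 36) * ((9 + (a + 3 / 5) ^ 2) * (18 + (a + 3 / 5) ^ 2)) ≤
      16 * (9 + a ^ 2) *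
        ((a + 3 / 5) * ((a + 3 / 5) ^ 3 - (a + 3 / 5) ^ 2 + 9 * (a + 3 / 5) - 18)) := by
  obtain ⟨p, hp, rfl⟩ : ∃ p, 0 ≤ p ∧ a = 2 + p := ⟨a - 2, by linarith, by ring⟩
  have hp' : p ≤ 3 / 20 := by linarith
  -- as a polynomial in `p`, the difference has only its constant coefficient negative
  nlinarith [pow_le_pow_left₀ hp hp' 2, pow_le_pow_left₀ hp hp' 3, pow_le_pow_left₀ hp hp' 4,
    pow_le_pow_left₀ hp hp' 5, pow_le_pow_left₀ hp hp' 6, pow_le_pow_left₀ hp hp' 7,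
    pow_le_pow_left₀ hp hp' 8]

section

variable {a b K : ℝ} (ha : 2 ≤ a) (ha' : a ≤ 43 / 20) (hab : a + 3 / 5 ≤ b) (hK : 4 / 9 ≤ K)
include ha ha' hab hK

lemma leading_coeff_nonpos : 4 * a * (a - 2) - 4 * K * b * (b - 2) ≤ 0 := by
  have : a * (a - 2) ≤ 43 / 20 * (3 / 20) := by gcongr; linarith
  have : 4 / 9 * (13 / 5 * (3 / 5)) ≤ K * (b * (b - 2)) := by gcongr <;> linarith
  nlinarith

lemma second_coeff_nonpos :
    2 * a ^ 4 + 6 * a * b ^ 2 * (a - 2) - 4 * K * b * (b ^ 2 * (b - 1) + a ^ 2 * (b - 2)) ≤ 0 := by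
  have : a ^ 4 ≤ (43 / 20) ^ 4 := by gcongr
  have : a * (a - 2) ≤ 43 / 20 * (3 / 20) := by gcongr; linarith
  have : 4 / 9 * (13 / 5 * (8 / 5)) ≤ K * (b * (b - 1)) := by gcongr <;> linarith
  have : 4 / 9 * (13 / 5 * (2 ^ 2 * (3 / 5))) ≤ K * (b * (a ^ 2 * (b - 2))) := by
    gcongr <;> linarith
  nlinarith

lemma cleared_ineq_nine :
    a * (a ^ 3 + 18 * a - 36) * ((9 + b ^ 2) * (18 + b ^ 2)) ≤
      36 * K * (9 + a ^ 2) * (b * (b ^ 3 - b ^ 2 + 9 * b - 18)) := by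
  set c := a + 3 / 5 with hc_def
  have hc : 1 ≤ c := by linarith
  have hDb : 0 < (9 + b ^ 2) * (18 + b ^ 2) := by positivity
  have hDc : 0 < (9 + c ^ 2) * (18 + c ^ 2) := by positivity
  have hM : 0 ≤ 36 * K * (9 + a ^ 2) := by positivity
  have hQc : 0 ≤ c * (c ^ 3 - c ^ 2 + 9 * c - 18) := by
    have : 13 / 5 ≤ c := by rw [hc_def]; linarith
    have : 0 ≤ c ^ 3 - c ^ 2 + 9 * c - 18 := by nlinarith
    positivity
  have hedge : a * (a ^ 3 + 18 * a - 36) * ((9 + c ^ 2) * (18 + c ^ 2)) ≤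
      36 * K * (9 + a ^ 2) * (c * (c ^ 3 - c ^ 2 + 9 * c - 18)) := by
    refine (cleared_ineq_nine_edge ha ha').trans ?_
    gcongr
    linarith
  have hratio := (div_le_div_iff₀ hDb hDc).mp (ratio_antitoneOn hc (hc.trans hab) hab)
  refine le_of_mul_le_mul_right ?_ hDc
  -- `(9 + y²)(18 + y²) = y (y³ - y² + 9y - 18) + (y³ + 18y² + 18y + 162)`
  linear_combination mul_le_mul_of_nonneg_left hratio hM + mul_le_mul_of_nonneg_right hedge hDb.le

lemma cleared_ineq {X : ℝ} (hX : 9 ≤ X) :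
    a * (a ^ 3 + 2 * a * X - 4 * X) * (X + b ^ 2) * (2 * X + b ^ 2) ≤
      4 * K * b * X * (X + a ^ 2) * (b ^ 3 - b ^ 2 + (b - 2) * X) := by
  have h := cubic_nonpos_of_le (c₁ := a * b ^ 2 * (3 * a ^ 3 + 2 * a * b ^ 2 - 4 * b ^ 2)
      - 4 * K * a ^ 2 * b ^ 3 * (b - 1)) (leading_coeff_nonpos ha ha' hab hK)
    (second_coeff_nonpos ha ha' hab hK) (by positivity : 0 ≤ a ^ 4 * b ^ 4) (by norm_num) hX
    (by linear_combination cleared_ineq_nine ha ha' hab hK)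
  linear_combination h

end

lemma xiTerm_le_mul_xiTerm {x a b K : ℝ} (hx : 9 ≤ x ^ 2) (ha : 2 ≤ a) (ha' : a ≤ 43 / 20)
    (hab : a + 3 / 5 ≤ b) (hK : 4 / 9 ≤ K) : xiTerm x a ≤ K * xiTerm x b := by
  have hx0 : x ≠ 0 := by rintro rfl; norm_num at hx
  calc xiTerm x a ≤ a * (a ^ 3 + 2 * a * x ^ 2 - 4 * x ^ 2) / (8 * x ^ 2 * (x ^ 2 + a ^ 2)) :=
        xiTerm_le hx0 a
    _ ≤ K * (b * (b ^ 3 - b ^ 2 + (b - 2) * x ^ 2) /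
          (2 * (2 * x ^ 2 + b ^ 2) * (x ^ 2 + b ^ 2))) := by
        rw [mul_div_assoc', div_le_div_iff₀ (by positivity) (by positivity)]
        linear_combination 2 * cleared_ineq ha ha' hab hK hx
    _ ≤ K * xiTerm x b := by gcongr; exact le_xiTerm hx0 b

lemma four_ninths_le_κ : 4 / 9 ≤ κ := by
  have h : √5 ≤ 9 / 4 := Real.sqrt_le_iff.mpr ⟨by norm_num, by norm_num⟩
  rw [κ, le_div_iff₀ (by positivity)]
  linarith

lemma add_three_fifths_le_σ₁ {σ : ℝ} (hσ : σ ≤ 6 / 5) : σ + 3 / 5 ≤ σ₁ σ := by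
  have h : 2 * σ + 1 / 5 ≤ √(1 + 4 * σ ^ 2) :=
    (le_abs_self _).trans (Real.abs_le_sqrt (by nlinarith))
  rw [σ₁]
  linarith

/-- For `k ≥ 3`, `1 ≤ σ ≤ 1.15` and `t ≥ 1`: `Ξ(σ,k,t,1) ≤ 0`. -/
theorem Xi_delta_one_nonpos (k : ℕ) (hk : 3 ≤ k) (σ : ℝ)
    (hσ : 1 ≤ σ) (hσ' : σ ≤ 1.15) (t : ℝ) (ht : 1 ≤ t) :
    Xi σ k t 1 ≤ 0 := by
  have hkt : 3 ≤ (k : ℝ) * t := by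
    have : (3 : ℝ) ≤ k := by exact_mod_cast hk
    nlinarith
  rw [Xi_eq_xiTerm_sub, sub_nonpos]
  exact xiTerm_le_mul_xiTerm (by nlinarith) (by linarith) (by linarith)
    (by linarith [add_three_fifths_le_σ₁ (σ := σ) (by linarith)]) four_ninths_le_κ
end
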